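/- Variance bound for the Horvitz–Thompson estimator (Lemma 2): Given a dependency structure B, the variance of the Horvitz–Thompson estimator satisfies Var(τ̂) ≤ (1/(N²p)) Σ_{i=1}^N E[(μ_i^{(1)}(Z))²] + (1/(N²(1−p))) Σ_{i=1}^N E[(μ_i^{(0)}(Z))²] + (1/N²) Σ_{i=1}^N Σ_{j∈B(i), j≠i} Σ_{a∈{0,1}} Σ_{b∈{0,1}} (−1)^{a+b} ( E[μ_i(Z[i:=a][j:=b]) μ_j(Z[i:=a][j:=b])] − E[μ_i^{(a)}(Z)] E[μ_j^{(b)}(Z)] ). -/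

import Mathlib

/-- Expectation with respect to the Bernoulli(p) product measure on `{0,1}^N`. -/
noncomputable def bexp {N : ℕ} (p : ℝ) (f : (Fin N → Bool) → ℝ) : ℝ :=
  ∑ z : Fin N → Bool, (∏ i, if z i then p else 1 - p) * f z

/-- Variance under the Bernoulli(p) product measure. -/
noncomputable def bvar {N : ℕ} (p : ℝ) (f : (Fin N → Bool) → ℝ) : ℝ :=
  bexp p (fun z => (f z) ^ 2) - (bexp p f) ^ 2

/-- Covariance under the Bernoulli(p) product measure. -/
noncomputable def bcov {N : ℕ} (p : ℝ) (f g : (Fin N → Bool) → ℝ) : ℝ :=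
  bexp p (fun z => f z * g z) - bexp p f * bexp p g

/-- `(−1)^a` for `a ∈ {0,1}` (with `true ↦ −1`, `false ↦ 1`). -/
def sgn (a : Bool) : ℝ := if a then -1 else 1

/-- A dependency structure: `B i` contains `i`, and for `j ∉ B i` the circle averages
`μ_i`, `μ_j` do not depend on each other's treatment coordinate and the marginalized
circle averages are uncorrelated. -/
def DepStruct {N : ℕ} (p : ℝ) (μ : Fin N → (Fin N → Bool) → ℝ)
    (B : Fin N → Finset (Fin N)) : Prop :=
  (∀ i, i ∈ B i) ∧
  ∀ i j : Fin N, j ∉ B i →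
    (∀ z : Fin N → Bool, μ i (Function.update z j false) = μ i (Function.update z j true)) ∧
    (∀ z : Fin N → Bool, μ j (Function.update z i false) = μ j (Function.update z i true)) ∧
    (∀ a b : Bool, bcov p (fun z => μ i (Function.update z i a))
        (fun z => μ j (Function.update z j b)) = 0)

/-- Horvitz–Thompson estimator. -/
noncomputable def ht (N : ℕ) (p : ℝ) (μ : Fin N → (Fin N → Bool) → ℝ)
    (z : Fin N → Bool) : ℝ :=
  (1 / (N * p)) * ∑ i, (if z i then (1 : ℝ) else 0) * μ i z
    - (1 / (N * (1 - p))) * ∑ i, (1 - if z i then (1 : ℝ) else 0) * μ i z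

/-!
Conditioning on one coordinate, `E f = p E f(Z[i:=1]) + (1-p) E f(Z[i:=0])`, lets the
inverse-probability weight of the Horvitz–Thompson summand `X_i` cancel its probability:
`P(Z_i = a) w_a = ±1/N`. Hence `E X_i`, `E X_i²` and, for `i ≠ j`, `E X_i X_j` are explicit
signed combinations of moments of `μ_i(Z[i:=a])` and of `μ_i μ_j` at `Z[i:=a][j:=b]`.
In `Var(∑ X_i) = ∑_{i,j} Cov(X_i, X_j)` each diagonal term is at most `E X_i²`, and an
off-diagonal term with `j ∉ B(i)` vanishes: there `μ_i μ_j` at `Z[i:=a][j:=b]` equals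
`μ_i(Z[i:=a]) μ_j(Z[j:=b])`, and these are uncorrelated.
-/

open Function

def bweight (p : ℝ) (a : Bool) : ℝ := if a then p else 1 - p

section BernoulliProduct

variable {N : ℕ} (p : ℝ)

lemma sum_bweight : ∑ a, bweight p a = 1 := by
  simp [bweight]

lemma bexp_eq_sum_prod_funSplitAt (i : Fin N) (f : (Fin N → Bool) → ℝ) :
    bexp p f = ∑ g : {j // j ≠ i} → Bool, (∏ j, bweight p (g j)) *
      ∑ b, bweight p b * f ((Equiv.funSplitAt i Bool).symm (b, g)) := by
  change ∑ z, (∏ j, bweight p (z j)) * f z = _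
  rw [← (Equiv.funSplitAt i Bool).symm.sum_comp, Fintype.sum_prod_type_right]
  refine Fintype.sum_congr _ _ fun g => ?_
  rw [Finset.mul_sum]
  refine Fintype.sum_congr _ _ fun b => ?_
  have h_at : (Equiv.funSplitAt i Bool).symm (b, g) i = b := by
    simp [Equiv.funSplitAt, Equiv.piSplitAt]
  have h_ne (j : {j // j ≠ i}) : (Equiv.funSplitAt i Bool).symm (b, g) j = g j := by
    simp [Equiv.funSplitAt, Equiv.piSplitAt, j.2]
  simp only [Fintype.prod_eq_mul_prod_subtype_ne _ i, h_at, h_ne]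
  ring

omit p in
lemma update_funSplitAt_symm (i : Fin N) (a b : Bool) (g : {j // j ≠ i} → Bool) :
    update ((Equiv.funSplitAt i Bool).symm (b, g)) i a
      = (Equiv.funSplitAt i Bool).symm (a, g) := by
  ext j
  by_cases h : j = i
  · subst h; simp [Equiv.funSplitAt, Equiv.piSplitAt]
  · simp [Equiv.funSplitAt, Equiv.piSplitAt, h]

lemma bexp_eq_sum_bexp_update (i : Fin N) (f : (Fin N → Bool) → ℝ) :
    bexp p f = ∑ a, bweight p a * bexp p (fun z => f (update z i a)) := by
  simp only [bexp_eq_sum_prod_funSplitAt p i, update_funSplitAt_symm, ← Finset.sum_mul,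
    sum_bweight, one_mul, Finset.mul_sum]
  rw [Finset.sum_comm]
  refine Fintype.sum_congr _ _ fun g => ?_
  refine Fintype.sum_congr _ _ fun a => ?_
  ring

lemma bexp_eq_sum_sum_bexp_update_update (i j : Fin N) (f : (Fin N → Bool) → ℝ) :
    bexp p f = ∑ a, ∑ b, bweight p a * bweight p b *
      bexp p (fun z => f (update (update z i a) j b)) := by
  rw [bexp_eq_sum_bexp_update p j, Finset.sum_comm]
  refine Fintype.sum_congr _ _ fun b => ?_
  rw [bexp_eq_sum_bexp_update p i, Finset.mul_sum]
  refine Fintype.sum_congr _ _ fun a => ?_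
  ring

lemma bexp_const_mul (c : ℝ) (f : (Fin N → Bool) → ℝ) :
    bexp p (fun z => c * f z) = c * bexp p f := by
  simp only [bexp, Finset.mul_sum]
  exact Fintype.sum_congr _ _ fun z => by ring

lemma bexp_sum {ι : Type*} (s : Finset ι) (f : ι → (Fin N → Bool) → ℝ) :
    bexp p (fun z => ∑ i ∈ s, f i z) = ∑ i ∈ s, bexp p (f i) := by
  simp only [bexp, Finset.mul_sum]
  exact Finset.sum_comm

lemma bvar_eq_bcov (f : (Fin N → Bool) → ℝ) : bvar p f = bcov p f f := by
  simp only [bvar, bcov, sq]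

lemma bcov_sum_sum {ι κ : Type*} (s : Finset ι) (t : Finset κ)
    (f : ι → (Fin N → Bool) → ℝ) (g : κ → (Fin N → Bool) → ℝ) :
    bcov p (fun z => ∑ i ∈ s, f i z) (fun z => ∑ j ∈ t, g j z)
      = ∑ i ∈ s, ∑ j ∈ t, bcov p (f i) (g j) := by
  simp only [bcov, Finset.sum_mul_sum, bexp_sum, ← Finset.sum_sub_distrib]

omit p in
lemma apply_update_eq_apply {f : (Fin N → Bool) → ℝ} {j : Fin N}
    (hf : ∀ z, f (update z j false) = f (update z j true)) (z : Fin N → Bool) (b : Bool) :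
    f (update z j b) = f z := by
  conv_rhs => rw [← update_eq_self j z]
  cases b <;> cases z j <;> simp [hf]

lemma bcov_update_update_of_indep {f g : (Fin N → Bool) → ℝ} {i j : Fin N}
    (hij : i ≠ j) (hf : ∀ z, f (update z j false) = f (update z j true))
    (hg : ∀ z, g (update z i false) = g (update z i true)) (a b : Bool) :
    bexp p (fun z => f (update (update z i a) j b) * g (update (update z i a) j b))
        - bexp p (fun z => f (update z i a)) * bexp p (fun z => g (update z j b))
      = bcov p (fun z => f (update z i a)) (fun z => g (update z j b)) := by
  have h_prod (z : Fin N → Bool) :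
      f (update (update z i a) j b) * g (update (update z i a) j b)
        = f (update z i a) * g (update z j b) := by
    rw [apply_update_eq_apply hf, update_comm hij, apply_update_eq_apply hg]
  simp only [bcov, h_prod]

end BernoulliProduct

noncomputable def htCoeff (N : ℕ) (p : ℝ) (a : Bool) : ℝ :=
  if a then 1 / (N * p) else -(1 / (N * (1 - p)))

noncomputable def htTerm {N : ℕ} (p : ℝ) (μ : Fin N → (Fin N → Bool) → ℝ) (i : Fin N)
    (z : Fin N → Bool) : ℝ :=
  htCoeff N p (z i) * μ i z

lemma ht_eq_sum_htTerm (N : ℕ) (p : ℝ) (μ : Fin N → (Fin N → Bool) → ℝ) :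
    ht N p μ = fun z => ∑ i, htTerm p μ i z := by
  ext z
  rw [ht, Finset.mul_sum, Finset.mul_sum, ← Finset.sum_sub_distrib]
  refine Fintype.sum_congr _ _ fun i => ?_
  cases h : z i <;> simp [htTerm, htCoeff, h]

lemma htTerm_update_self {N : ℕ} (p : ℝ) (μ : Fin N → (Fin N → Bool) → ℝ) (i : Fin N)
    (a : Bool) (z : Fin N → Bool) :
    htTerm p μ i (update z i a) = htCoeff N p a * μ i (update z i a) := by
  simp [htTerm]

lemma bweight_mul_htCoeff {N : ℕ} {p : ℝ} (hp0 : p ≠ 0) (hp1 : 1 - p ≠ 0) (a : Bool) :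
    bweight p a * htCoeff N p a = -sgn a / N := by
  cases a <;> simp [bweight, htCoeff, sgn] <;> field_simp

lemma bweight_mul_htCoeff_sq {N : ℕ} {p : ℝ} (hp0 : p ≠ 0) (hp1 : 1 - p ≠ 0) (a : Bool) :
    bweight p a * htCoeff N p a ^ 2 = 1 / (N ^ 2 * bweight p a) := by
  cases a <;> simp [bweight, htCoeff] <;> field_simp

section HTMoments

variable {N : ℕ} (p : ℝ) (μ : Fin N → (Fin N → Bool) → ℝ)

lemma bexp_htTerm (i : Fin N) :
    bexp p (htTerm p μ i)
      = ∑ a, bweight p a * htCoeff N p a * bexp p (fun z => μ i (update z i a)) := by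
  rw [bexp_eq_sum_bexp_update p i]
  simp only [htTerm_update_self, bexp_const_mul, mul_assoc]

lemma bexp_htTerm_sq (i : Fin N) :
    bexp p (fun z => htTerm p μ i z ^ 2)
      = ∑ a, bweight p a * htCoeff N p a ^ 2 * bexp p (fun z => μ i (update z i a) ^ 2) := by
  rw [bexp_eq_sum_bexp_update p i]
  simp only [htTerm_update_self, mul_pow, bexp_const_mul, mul_assoc]

lemma bexp_htTerm_mul_htTerm {i j : Fin N} (hij : i ≠ j) :
    bexp p (fun z => htTerm p μ i z * htTerm p μ j z)
      = ∑ a, ∑ b, bweight p a * htCoeff N p a * (bweight p b * htCoeff N p b) *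
          bexp p (fun z =>
            μ i (update (update z i a) j b) * μ j (update (update z i a) j b)) := by
  rw [bexp_eq_sum_sum_bexp_update_update p i j]
  refine Fintype.sum_congr _ _ fun a => Fintype.sum_congr _ _ fun b => ?_
  have h_terms (z : Fin N → Bool) :
      htTerm p μ i (update (update z i a) j b) * htTerm p μ j (update (update z i a) j b)
        = htCoeff N p a * htCoeff N p b *
          (μ i (update (update z i a) j b) * μ j (update (update z i a) j b)) := by
    simp only [htTerm, update_self, update_of_ne hij]
    ring
  simp only [h_terms, bexp_const_mul]
  ring

lemma bcov_htTerm_self_le (hp0 : p ≠ 0) (hp1 : 1 - p ≠ 0) (i : Fin N) :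
    bcov p (htTerm p μ i) (htTerm p μ i)
      ≤ 1 / ((N : ℝ) ^ 2 * p) * bexp p (fun z => μ i (update z i true) ^ 2)
        + 1 / ((N : ℝ) ^ 2 * (1 - p)) * bexp p (fun z => μ i (update z i false) ^ 2) := by
  calc bcov p (htTerm p μ i) (htTerm p μ i) ≤ bexp p (fun z => htTerm p μ i z ^ 2) := by
        simp only [bcov, sq]
        exact sub_le_self _ (mul_self_nonneg _)
    _ = ∑ a, 1 / ((N : ℝ) ^ 2 * bweight p a) * bexp p (fun z => μ i (update z i a) ^ 2) := by
        simp only [bexp_htTerm_sq, bweight_mul_htCoeff_sq hp0 hp1]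
    _ = _ := by rw [Fintype.sum_bool]; rfl

lemma bcov_htTerm_of_ne (hp0 : p ≠ 0) (hp1 : 1 - p ≠ 0) {i j : Fin N} (hij : i ≠ j) :
    bcov p (htTerm p μ i) (htTerm p μ j)
      = 1 / (N : ℝ) ^ 2 * ∑ a, ∑ b, sgn a * sgn b *
          (bexp p (fun z => μ i (update (update z i a) j b) * μ j (update (update z i a) j b))
            - bexp p (fun z => μ i (update z i a)) * bexp p (fun z => μ j (update z j b))) := by
  rw [bcov, bexp_htTerm_mul_htTerm p μ hij, bexp_htTerm, bexp_htTerm]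
  simp only [bweight_mul_htCoeff hp0 hp1, Fintype.sum_bool]
  ring

end HTMoments

lemma bcov_htTerm_eq_zero_of_notMem {N : ℕ} {p : ℝ} {μ : Fin N → (Fin N → Bool) → ℝ}
    {B : Fin N → Finset (Fin N)} (hB : DepStruct p μ B) (hp0 : p ≠ 0) (hp1 : 1 - p ≠ 0)
    {i j : Fin N} (hj : j ∉ B i) :
    bcov p (htTerm p μ i) (htTerm p μ j) = 0 := by
  have hij : i ≠ j := by rintro rfl; exact hj (hB.1 i)
  obtain ⟨hμi, hμj, h_uncorr⟩ := hB.2 i j hj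
  simp [bcov_htTerm_of_ne p μ hp0 hp1 hij, bcov_update_update_of_indep p hij hμi hμj, h_uncorr]

lemma sum_bcov_htTerm_eq_add_sum_erase {N : ℕ} {p : ℝ} {μ : Fin N → (Fin N → Bool) → ℝ}
    {B : Fin N → Finset (Fin N)} (hB : DepStruct p μ B) (hp0 : p ≠ 0) (hp1 : 1 - p ≠ 0)
    (i : Fin N) :
    ∑ j, bcov p (htTerm p μ i) (htTerm p μ j)
      = bcov p (htTerm p μ i) (htTerm p μ i)
        + ∑ j ∈ (B i).erase i, bcov p (htTerm p μ i) (htTerm p μ j) := by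
  rw [← Finset.add_sum_erase _ _ (Finset.mem_univ i)]
  congr 1
  refine (Finset.sum_subset (Finset.erase_subset_erase _ (Finset.subset_univ _)) ?_).symm
  intro j hj hjB
  exact bcov_htTerm_eq_zero_of_notMem hB hp0 hp1
    fun h => hjB (Finset.mem_erase.2 ⟨(Finset.mem_erase.1 hj).1, h⟩)

theorem ht_variance_bound_general (N : ℕ) (p : ℝ) (hp0 : 0 < p) (hp1 : p < 1)
    (μ : Fin N → (Fin N → Bool) → ℝ) (B : Fin N → Finset (Fin N))
    (hB : DepStruct p μ B) :
    bvar p (ht N p μ)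
      ≤ (1 / ((N : ℝ) ^ 2 * p)) * ∑ i, bexp p (fun z => (μ i (Function.update z i true)) ^ 2)
        + (1 / ((N : ℝ) ^ 2 * (1 - p))) *
            ∑ i, bexp p (fun z => (μ i (Function.update z i false)) ^ 2)
        + (1 / (N : ℝ) ^ 2) * ∑ i, ∑ j ∈ (B i).erase i, ∑ a : Bool, ∑ b : Bool,
            sgn a * sgn b *
              (bexp p (fun z =>
                  μ i (Function.update (Function.update z i a) j b)
                    * μ j (Function.update (Function.update z i a) j b))
                - bexp p (fun z => μ i (Function.update z i a))
                    * bexp p (fun z => μ j (Function.update z j b))) := by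
  have hq : 1 - p ≠ 0 := sub_ne_zero.2 hp1.ne'
  rw [ht_eq_sum_htTerm, bvar_eq_bcov, bcov_sum_sum, Finset.mul_sum, Finset.mul_sum,
    Finset.mul_sum, ← Finset.sum_add_distrib, ← Finset.sum_add_distrib]
  refine Finset.sum_le_sum fun i _ => ?_
  rw [sum_bcov_htTerm_eq_add_sum_erase hB hp0.ne' hq i, Finset.mul_sum]
  refine add_le_add (bcov_htTerm_self_le p μ hp0.ne' hq i) (Finset.sum_congr rfl fun j hj => ?_).le
  exact bcov_htTerm_of_ne p μ hp0.ne' hq (Finset.ne_of_mem_erase hj).symm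

/-- Variance bound for the Horvitz–Thompson estimator (Lemma 2). -/
theorem ht_variance_bound (N : ℕ) (hN : 1 ≤ N) (p : ℝ) (hp0 : 0 < p) (hp1 : p < 1)
    (μ : Fin N → (Fin N → Bool) → ℝ) (B : Fin N → Finset (Fin N))
    (hB : DepStruct p μ B) :
    bvar p (ht N p μ)
      ≤ (1 / ((N : ℝ) ^ 2 * p)) * ∑ i, bexp p (fun z => (μ i (Function.update z i true)) ^ 2)
        + (1 / ((N : ℝ) ^ 2 * (1 - p))) *
            ∑ i, bexp p (fun z => (μ i (Function.update z i false)) ^ 2)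
        + (1 / (N : ℝ) ^ 2) * ∑ i, ∑ j ∈ (B i).erase i, ∑ a : Bool, ∑ b : Bool,
            sgn a * sgn b *
              (bexp p (fun z =>
                  μ i (Function.update (Function.update z i a) j b)
                    * μ j (Function.update (Function.update z i a) j b))
                - bexp p (fun z => μ i (Function.update z i a))
                    * bexp p (fun z => μ j (Function.update z j b))) :=
  ht_variance_bound_general N p hp0 hp1 μ B hB
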